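/- arXiv:2412.08334 — 6 statements merged into one kernel-verified Lean document; each statement's English description precedes it below -/
import Mathlib

section
/- Let (X_n) be an i.i.d. sequence of integrable real random variables with E[X_1] > 0, and let S_0 = 0, S_{n+1} = S_n + X_{n+1}. Then with positive probability S_n ≥ 0 for all n, i.e., the infimum of the walk is attained at S_0 = 0 with positive probability. -/
/-!
By the strong law of large numbers `S n / n → E[X 0] > 0`, so `S n → ∞` and almost every path
of the walk attains a global minimum at some time `n`. From such a time on, the increments
`X n, X (n+1), …` form a walk that stays nonnegative; since that shifted sequence is again i.i.d.
with the law of `X`, this has probability `ℙ {∀ m, 0 ≤ S m}`. If that probability were zero,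
the countably many events "the minimum is attained at `n`" would all be null, although their
union has full measure.
-/

open MeasureTheory ProbabilityTheory Filter Finset

lemma ProbabilityTheory.iIndepFun.identDistrib_shift {Ω 𝓧 : Type*} [MeasurableSpace Ω]
    [MeasurableSpace 𝓧] {μ : Measure Ω} {X : ℕ → Ω → 𝓧} (hmeas : ∀ n, Measurable (X n))
    (hindep : iIndepFun X μ) (hident : ∀ n, IdentDistrib (X n) (X 0) μ μ) (n : ℕ) :
    IdentDistrib (fun ω i ↦ X (n + i) ω) (fun ω i ↦ X i ω) μ μ where
  aemeasurable_fst := (measurable_pi_lambda _ fun _ ↦ hmeas _).aemeasurable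
  aemeasurable_snd := (measurable_pi_lambda _ fun _ ↦ hmeas _).aemeasurable
  map_eq := by
    rw [(hindep.precomp (add_right_injective n)).map_fun_eq_infinitePi_map (fun _ ↦ hmeas _),
      hindep.map_fun_eq_infinitePi_map hmeas]
    simp only [(hident _).map_eq]

lemma measurableSet_forall_sum_range_nonneg :
    MeasurableSet {x : ℕ → ℝ | ∀ m, 0 ≤ ∑ i ∈ range m, x i} := by
  simp only [Set.ofPred_forall]
  exact .iInter fun m ↦ measurableSet_le measurable_const
    (Finset.measurable_sum _ fun i _ ↦ measurable_pi_apply i)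

lemma sum_range_shift_nonneg_of_forall_le {x : ℕ → ℝ} {n : ℕ}
    (hmin : ∀ m, ∑ i ∈ range n, x i ≤ ∑ i ∈ range m, x i) (m : ℕ) :
    0 ≤ ∑ i ∈ range m, x (n + i) := by
  have := hmin (n + m)
  rw [sum_range_add] at this
  linarith

section Walk

variable {Ω : Type*} [MeasureSpace Ω] {X : ℕ → Ω → ℝ}

lemma measure_walk_min_at_le (hmeas : ∀ n, Measurable (X n)) (hindep : iIndepFun X ℙ)
    (hident : ∀ n, IdentDistrib (X n) (X 0) ℙ ℙ) (n : ℕ) :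
    ℙ {ω | ∀ m, ∑ i ∈ range n, X i ω ≤ ∑ i ∈ range m, X i ω}
      ≤ ℙ {ω | ∀ m, 0 ≤ ∑ i ∈ range m, X i ω} :=
  calc ℙ {ω | ∀ m, ∑ i ∈ range n, X i ω ≤ ∑ i ∈ range m, X i ω}
      ≤ ℙ {ω | ∀ m, 0 ≤ ∑ i ∈ range m, X (n + i) ω} :=
        measure_mono fun _ ↦ sum_range_shift_nonneg_of_forall_le
    _ = ℙ {ω | ∀ m, 0 ≤ ∑ i ∈ range m, X i ω} :=
        (hindep.identDistrib_shift hmeas hident n).measure_mem_eq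
          measurableSet_forall_sum_range_nonneg

lemma ae_exists_walk_min (hindep : iIndepFun X ℙ) (hident : ∀ n, IdentDistrib (X n) (X 0) ℙ ℙ)
    (hint : Integrable (X 0) ℙ) (hpos : 0 < ∫ ω, X 0 ω ∂ℙ) :
    ∀ᵐ ω, ∃ n, ∀ m, ∑ i ∈ range n, X i ω ≤ ∑ i ∈ range m, X i ω := by
  filter_upwards [strong_law_ae_real X hint (fun _ _ hij ↦ hindep.indepFun hij) hident]
    with ω hω
  have htop : Tendsto (fun n ↦ ∑ i ∈ range n, X i ω) atTop atTop :=
    tendsto_natCast_atTop_atTop.num hpos hω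
  rw [← Nat.cofinite_eq_atTop] at htop
  exact htop.exists_forall_le

end Walk

/-- A random walk on ℝ with i.i.d. integrable increments of strictly positive mean,
started at 0, stays nonnegative forever with positive probability. -/
theorem stmt_0 {Ω : Type*} [MeasureSpace Ω] [IsProbabilityMeasure (ℙ : Measure Ω)]
    (X : ℕ → Ω → ℝ) (hmeas : ∀ n, Measurable (X n))
    (hindep : iIndepFun X ℙ)
    (hident : ∀ n, IdentDistrib (X n) (X 0) ℙ ℙ)
    (hint : Integrable (X 0) ℙ)
    (hpos : 0 < ∫ ω, X 0 ω ∂ℙ) :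
    0 < ℙ {ω | ∀ n : ℕ, 0 ≤ ∑ i ∈ Finset.range n, X i ω} := by
  by_contra! hzero
  have hnull : ∀ᵐ ω, ¬ ∃ n, ∀ m, ∑ i ∈ range n, X i ω ≤ ∑ i ∈ range m, X i ω := by
    simp only [not_exists, ae_all_iff]
    intro n
    exact measure_eq_zero_iff_ae_notMem.1 <|
      nonpos_iff_eq_zero.1 <| (measure_walk_min_at_le hmeas hindep hident n).trans hzero
  obtain ⟨ω, hmin, hnot⟩ := ((ae_exists_walk_min hindep hident hint hpos).and hnull).exists
  exact hnot hmin
end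

section
/- Let g be the probability generating function of a probability distribution (p_k) on ℕ with p_0 = 0, p_1 > 0 and mean μ = g'(1) > 2. Then the equation g(x) = x^2 has exactly one solution in the open interval (0,1). -/
/-!
Since `p 0 = 0`, the generating function factors as `g x = x * f x`, where `f` is the generating
function of the shifted distribution `q k = p (k + 1)`, so on `(0, 1)` the equation `g x = x ^ 2`
reads `f x = x`. Now `f 0 = p 1 > 0`, while `f` has mean `μ - 1 > 1`, so `f x < x` just left of
`1` and the intermediate value theorem yields a fixed point. The mean also forces `q j > 0` for some
`j ≥ 2`, so `f` is strictly convex on `[0, 1]`; a strictly convex function has at most two fixed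
points, and `1` is one of them.
-/

open Set Finset Function

theorem StrictConvexOn.eq_of_isFixedPt_of_lt {𝕜 : Type*} [Field 𝕜] [LinearOrder 𝕜]
    [IsStrictOrderedRing 𝕜] {s : Set 𝕜} {f : 𝕜 → 𝕜} (hf : StrictConvexOn 𝕜 s f) {x y z : 𝕜}
    (hx : x ∈ s) (hy : y ∈ s) (hz : z ∈ s) (hxz : x < z) (hyz : y < z)
    (hfx : IsFixedPt f x) (hfy : IsFixedPt f y) (hfz : IsFixedPt f z) : x = y := by
  have key : ∀ {u v}, u ∈ s → IsFixedPt f u → IsFixedPt f v → u < v → v < z → False := by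
    intro u v hu hfu hfv huv hvz
    have := hf.slope_strict_mono_adjacent hu hz huv hvz
    rw [hfu, hfv, hfz, div_self (sub_pos.2 huv).ne', div_self (sub_pos.2 hvz).ne'] at this
    exact lt_irrefl _ this
  rcases lt_trichotomy x y with hxy | hxy | hxy
  · exact (key hx hfx hfy hxy hyz).elim
  · exact hxy
  · exact (key hy hfy hfx hxy hxz).elim

noncomputable def pgf (q : ℕ → ℝ) (x : ℝ) : ℝ := ∑' k, q k * x ^ k

theorem pgf_zero (q : ℕ → ℝ) : pgf q 0 = q 0 := by
  rw [pgf, tsum_eq_single 0 fun k hk => by simp [hk]]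
  simp

theorem pgf_one (q : ℕ → ℝ) : pgf q 1 = ∑' k, q k := by
  simp [pgf]

theorem pgf_eq_mul_pgf_succ {p : ℕ → ℝ} {x : ℝ} (hp0 : p 0 = 0)
    (hs : Summable fun k => p k * x ^ k) : pgf p x = x * pgf (fun k => p (k + 1)) x := by
  rw [pgf, hs.tsum_eq_zero_add, hp0, zero_mul, zero_add, pgf, ← tsum_mul_left]
  congr 1 with k
  ring

section Nonneg

variable {q : ℕ → ℝ} (hq : ∀ k, 0 ≤ q k)
include hq

theorem summable_mul_pow_of_nonneg (hs : Summable q) {x : ℝ} (hx : x ∈ Icc (0 : ℝ) 1) :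
    Summable fun k => q k * x ^ k :=
  hs.of_nonneg_of_le (fun k => mul_nonneg (hq k) (pow_nonneg hx.1 k))
    fun k => mul_le_of_le_one_right (hq k) (pow_le_one₀ hx.1 hx.2)

theorem continuousOn_pgf (hs : Summable q) : ContinuousOn (pgf q) (Icc 0 1) := by
  refine continuousOn_tsum (fun k => (continuous_const.mul (continuous_pow k)).continuousOn) hs
    fun k x hx => ?_
  rw [Real.norm_of_nonneg (mul_nonneg (hq k) (pow_nonneg hx.1 k))]
  exact mul_le_of_le_one_right (hq k) (pow_le_one₀ hx.1 hx.2)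

theorem strictConvexOn_pgf (hs : Summable q) {j : ℕ} (hj : 2 ≤ j) (hqj : 0 < q j) :
    StrictConvexOn ℝ (Icc 0 1) (pgf q) := by
  refine ⟨convex_Icc 0 1, fun x hx y hy hxy a b ha hb hab => ?_⟩
  have hz : a • x + b • y ∈ Icc (0 : ℝ) 1 := convex_Icc 0 1 hx hy ha.le hb.le hab
  have hxs := (summable_mul_pow_of_nonneg hq hs hx).mul_left a
  have hys := (summable_mul_pow_of_nonneg hq hs hy).mul_left b
  have hle : ∀ k, q k * (a • x + b • y) ^ k ≤ a * (q k * x ^ k) + b * (q k * y ^ k) := by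
    intro k
    have := (convexOn_pow k).2 (mem_Ici.2 hx.1) (mem_Ici.2 hy.1) ha.le hb.le hab
    simp only [smul_eq_mul] at this ⊢
    nlinarith [hq k]
  have hlt : q j * (a • x + b • y) ^ j < a * (q j * x ^ j) + b * (q j * y ^ j) := by
    have := (strictConvexOn_pow hj).2 (mem_Ici.2 hx.1) (mem_Ici.2 hy.1) hxy ha hb hab
    simp only [smul_eq_mul] at this ⊢
    nlinarith
  calc pgf q (a • x + b • y) < ∑' k, (a * (q k * x ^ k) + b * (q k * y ^ k)) :=
        (summable_mul_pow_of_nonneg hq hs hz).tsum_lt_tsum hle hlt (hxs.add hys)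
    _ = a • pgf q x + b • pgf q y := by
        rw [hxs.tsum_add hys, tsum_mul_left, tsum_mul_left]; rfl

theorem exists_two_le_pos_of_one_lt_mean (hs : HasSum q 1) {m : ℝ}
    (hm : HasSum (fun k : ℕ => (k : ℝ) * q k) m) (h1m : 1 < m) : ∃ j, 2 ≤ j ∧ 0 < q j := by
  by_contra! h
  have hle : ∀ k : ℕ, (k : ℝ) * q k ≤ q k := by
    rintro (_ | _ | k)
    · simpa using hq 0
    · simp
    · simp [le_antisymm (h (k + 2) le_add_self) (hq _)]
  linarith [hasSum_le hle hm hs]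

theorem sum_range_mul_one_sub_pow_le_one_sub_pgf (hs : HasSum q 1) {x : ℝ}
    (hx : x ∈ Icc (0 : ℝ) 1) (N : ℕ) : ∑ k ∈ range N, q k * (1 - x ^ k) ≤ 1 - pgf q x := by
  have hsum : HasSum (fun k => q k * (1 - x ^ k)) (1 - pgf q x) := by
    simp only [mul_one_sub]
    exact hs.sub (summable_mul_pow_of_nonneg hq hs.summable hx).hasSum
  exact sum_le_hasSum _ (fun k _ => mul_nonneg (hq k) (sub_nonneg.2 (pow_le_one₀ hx.1 hx.2))) hsum

/-- `(1 - pgf q x) / (1 - x)` is at least `∑ k < N, q k * (1 + x + ⋯ + x ^ (k - 1))`, which tends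
to `∑ k < N, k * q k > 1` as `x → 1`. -/
theorem exists_pgf_lt_self (hs : HasSum q 1) {m : ℝ}
    (hm : HasSum (fun k : ℕ => (k : ℝ) * q k) m) (h1m : 1 < m) :
    ∃ x ∈ Ioo (0 : ℝ) 1, pgf q x < x := by
  obtain ⟨N, hN⟩ := (hm.tendsto_sum_nat.eventually (eventually_gt_nhds h1m)).exists
  set φ : ℝ → ℝ := fun x => ∑ k ∈ range N, q k * ∑ i ∈ range k, x ^ i
  have hφ1 : 1 < φ 1 := by simpa [φ, mul_comm] using hN
  have hφ : ContinuousAt φ 1 := by fun_prop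
  obtain ⟨x, hφx, hx⟩ := ((hφ.tendsto.mono_left nhdsWithin_le_nhds).eventually
    (eventually_gt_nhds hφ1) |>.and (Ioo_mem_nhdsLT zero_lt_one)).exists
  refine ⟨x, hx, ?_⟩
  have hsplit : (1 - x) * φ x = ∑ k ∈ range N, q k * (1 - x ^ k) := by
    refine (Finset.mul_sum _ _ _).trans (sum_congr rfl fun k _ => ?_)
    rw [← mul_neg_geom_sum]
    ring
  have := sum_range_mul_one_sub_pow_le_one_sub_pgf hq hs (Ioo_subset_Icc_self hx) N
  nlinarith [hx.2]

theorem existsUnique_pgf_eq_self (hs : HasSum q 1) (hq0 : 0 < q 0) {m : ℝ}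
    (hm : HasSum (fun k : ℕ => (k : ℝ) * q k) m) (h1m : 1 < m) :
    ∃! x, x ∈ Ioo (0 : ℝ) 1 ∧ pgf q x = x := by
  obtain ⟨x₀, hx₀, hlt⟩ := exists_pgf_lt_self hq hs hm h1m
  have hcont : ContinuousOn (fun x => pgf q x - x) (Icc 0 x₀) :=
    ((continuousOn_pgf hq hs.summable).mono (Icc_subset_Icc_right hx₀.2.le)).sub continuousOn_id
  obtain ⟨c, hc, hfc⟩ := intermediate_value_Ioo' hx₀.1.le hcont
    ⟨sub_neg.2 hlt, by simpa [pgf_zero] using hq0⟩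
  have hcmem : c ∈ Ioo (0 : ℝ) 1 := ⟨hc.1, hc.2.trans hx₀.2⟩
  refine ⟨c, ⟨hcmem, sub_eq_zero.1 hfc⟩, fun y ⟨hy, hfy⟩ => ?_⟩
  obtain ⟨j, hj, hqj⟩ := exists_two_le_pos_of_one_lt_mean hq hs hm h1m
  exact (strictConvexOn_pgf hq hs.summable hj hqj).eq_of_isFixedPt_of_lt
    (Ioo_subset_Icc_self hy) (Ioo_subset_Icc_self hcmem) (right_mem_Icc.2 zero_le_one) hy.2 hcmem.2
    hfy (sub_eq_zero.1 hfc) (by simp [IsFixedPt, pgf_one, hs.tsum_eq])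

end Nonneg

/-- If `g` is the pgf of a pmf `(p_k)` on ℕ with `p 0 = 0`, `p 1 > 0` and mean `> 2`,
then `g x = x ^ 2` has exactly one solution in `(0, 1)`. -/
theorem stmt_1 (p : ℕ → ℝ) (hnn : ∀ k, 0 ≤ p k) (hsum : ∑' k, p k = 1)
    (hp0 : p 0 = 0) (hp1 : 0 < p 1)
    (hmean_summable : Summable (fun k : ℕ => (k : ℝ) * p k))
    (hmean : 2 < ∑' k : ℕ, (k : ℝ) * p k) :
    ∃! x : ℝ, x ∈ Set.Ioo (0 : ℝ) 1 ∧ (∑' k, p k * x ^ k) = x ^ 2 := by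
  have hp : HasSum p 1 := by
    by_cases hs : Summable p
    · exact hsum ▸ hs.hasSum
    · simp [tsum_eq_zero_of_not_summable hs] at hsum
  have hq : HasSum (fun k => p (k + 1)) 1 := by
    simpa [hp0] using (hasSum_nat_add_iff' 1).2 hp
  have hqmean : HasSum (fun k : ℕ => (k : ℝ) * p (k + 1)) (∑' k : ℕ, (k : ℝ) * p k - 1) := by
    have := ((hasSum_nat_add_iff' 1).2 hmean_summable.hasSum).sub hq
    simpa only [sum_range_one, Nat.cast_zero, zero_mul, sub_zero, Nat.cast_add_one,
      add_one_mul, add_sub_cancel_right] using this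
  refine (existsUnique_congr fun x => and_congr_right fun hx => ?_).2
    (existsUnique_pgf_eq_self (fun k => hnn _) hq hp1 hqmean (by linarith))
  rw [show (∑' k, p k * x ^ k) = pgf p x from rfl, pgf_eq_mul_pgf_succ hp0
    (summable_mul_pow_of_nonneg hnn hp.summable (Ioo_subset_Icc_self hx)), sq]
  exact mul_right_inj' hx.1.ne'
end

section
/- For the geometric offspring distribution on ℕ with parameter s (p_k = s(1−s)^{k−1} for k ≥ 1) and g(x) = sx/(1−(1−s)x), the smallest solution in [0,1] of the equation x = g(x) + (1−x)g'(x) equals (1 − √(1−4s))/(2(1−s)) when 0 < s ≤ 1/4, and equals 1 when 1/4 < s ≤ 1. -/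
/-!
For `x ∈ [0, 1]` the denominator `1 - (1 - s) x = (1 - x) + s x` is positive, and clearing it
turns the equation into `(x - 1) ((1 - s)² x² - (1 - s) x + s) = 0`. Completing the square,
the quadratic factor vanishes iff `(2 (1 - s) x - 1)² = 1 - 4 s`. For `s > 1/4` this has no
solution, so `1` is the only root; for `s ≤ 1/4` every root satisfies `2 (1 - s) x ≥ 1 - √(1 - 4 s)`,
with equality at the smaller root, which lies in `[0, 1]`.
-/

open Set

namespace GeometricOffspring

noncomputable def pgf (s x : ℝ) : ℝ := s * x / (1 - (1 - s) * x)

noncomputable def pgfDeriv (s x : ℝ) : ℝ := s / (1 - (1 - s) * x) ^ 2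

def solutionSet (s : ℝ) : Set ℝ := {x | x ∈ Icc 0 1 ∧ x = pgf s x + (1 - x) * pgfDeriv s x}

noncomputable def smallRoot (s : ℝ) : ℝ := (1 - √(1 - 4 * s)) / (2 * (1 - s))

variable {s x : ℝ}

lemma eq_pgf_add_mul_pgfDeriv_iff (hD : 1 - (1 - s) * x ≠ 0) :
    x = pgf s x + (1 - x) * pgfDeriv s x ↔
      (x - 1) * ((1 - s) ^ 2 * x ^ 2 - (1 - s) * x + s) = 0 := by
  have hsum : pgf s x + (1 - x) * pgfDeriv s x =
      (s * x * (1 - (1 - s) * x) + (1 - x) * s) / (1 - (1 - s) * x) ^ 2 := by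
    rw [pgf, pgfDeriv]
    field_simp
  rw [hsum, eq_div_iff (pow_ne_zero 2 hD)]
  constructor <;> intro h <;> linear_combination h

lemma one_sub_mul_pos (hs : 0 < s) (hx : x ∈ Icc 0 1) : 0 < 1 - (1 - s) * x := by
  rcases hx.2.lt_or_eq with hx1 | rfl
  · nlinarith [hx.1]
  · linarith

lemma mem_solutionSet_iff (hs : 0 < s) :
    x ∈ solutionSet s ↔
      x ∈ Icc 0 1 ∧ (x - 1) * ((1 - s) ^ 2 * x ^ 2 - (1 - s) * x + s) = 0 :=
  and_congr_right fun hx => eq_pgf_add_mul_pgfDeriv_iff (one_sub_mul_pos hs hx).ne'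

lemma quadratic_eq_zero_iff :
    (1 - s) ^ 2 * x ^ 2 - (1 - s) * x + s = 0 ↔ (2 * (1 - s) * x - 1) ^ 2 = 1 - 4 * s := by
  constructor <;> intro h
  · linear_combination 4 * h
  · linear_combination h / 4

lemma one_mem_solutionSet (hs : 0 < s) : 1 ∈ solutionSet s :=
  (mem_solutionSet_iff hs).2 ⟨right_mem_Icc.2 zero_le_one, by ring⟩

lemma isLeast_solutionSet_one (hs : 1 / 4 < s) : IsLeast (solutionSet s) 1 := by
  refine ⟨one_mem_solutionSet (by linarith), fun x hx => ?_⟩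
  obtain ⟨hx, hroot⟩ := (mem_solutionSet_iff (by linarith)).1 hx
  rcases mul_eq_zero.1 hroot with h | h
  · linarith
  · nlinarith [quadratic_eq_zero_iff.1 h]

lemma two_mul_one_sub_mul_smallRoot (hs : s < 1) :
    2 * (1 - s) * smallRoot s = 1 - √(1 - 4 * s) := by
  rw [smallRoot]
  field_simp [(by linarith : (1 - s) ≠ 0)]

lemma isLeast_solutionSet_smallRoot (hs : 0 < s) (hs4 : s ≤ 1 / 4) :
    IsLeast (solutionSet s) (smallRoot s) := by
  set u := √(1 - 4 * s)
  have hq : 0 < 2 * (1 - s) := by linarith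
  have hr : 2 * (1 - s) * smallRoot s = 1 - u := two_mul_one_sub_mul_smallRoot (by linarith)
  have hu0 : 0 ≤ u := Real.sqrt_nonneg _
  have hu : u ^ 2 = 1 - 4 * s := Real.sq_sqrt (by linarith)
  have hu1 : u ≤ 1 := by nlinarith
  have smallRoot_le : ∀ y, 1 - u ≤ 2 * (1 - s) * y → smallRoot s ≤ y :=
    fun y hy => le_of_mul_le_mul_left (hr ▸ hy) hq
  refine ⟨(mem_solutionSet_iff hs).2 ⟨⟨?_, smallRoot_le 1 (by linarith)⟩, ?_⟩, fun x hx => ?_⟩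
  · exact nonneg_of_mul_nonneg_right (hr ▸ sub_nonneg.2 hu1) hq
  · rw [quadratic_eq_zero_iff.2 (by rw [hr]; linear_combination hu), mul_zero]
  · obtain ⟨hx, hroot⟩ := (mem_solutionSet_iff hs).1 hx
    rcases mul_eq_zero.1 hroot with h | h
    · exact (sub_eq_zero.1 h) ▸ smallRoot_le 1 (by linarith)
    · have habs : |2 * (1 - s) * x - 1| = u := by
        rw [← Real.sqrt_sq_eq_abs, quadratic_eq_zero_iff.1 h]
      exact smallRoot_le x (by linarith [neg_abs_le (2 * (1 - s) * x - 1)])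

end GeometricOffspring

/-- For the geometric offspring distribution on ℕ with parameter `s`, with
`g x = s*x/(1-(1-s)*x)` and `g' x = s/(1-(1-s)*x)^2`, the smallest solution in `[0,1]`
of `x = g x + (1-x)*g' x` equals `(1-√(1-4s))/(2(1-s))` for `0 < s ≤ 1/4` and `1` for
`1/4 < s ≤ 1`. -/
theorem stmt_3 (s : ℝ) (hs : 0 < s) :
    (s ≤ 1/4 →
      IsLeast {x : ℝ | x ∈ Set.Icc (0 : ℝ) 1 ∧
          x = s * x / (1 - (1 - s) * x) + (1 - x) * (s / (1 - (1 - s) * x) ^ 2)}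
        ((1 - Real.sqrt (1 - 4 * s)) / (2 * (1 - s)))) ∧
    (1/4 < s → s ≤ 1 →
      IsLeast {x : ℝ | x ∈ Set.Icc (0 : ℝ) 1 ∧
          x = s * x / (1 - (1 - s) * x) + (1 - x) * (s / (1 - (1 - s) * x) ^ 2)}
        1) :=
  ⟨fun hs4 => GeometricOffspring.isLeast_solutionSet_smallRoot hs hs4,
    fun hs4 _ => GeometricOffspring.isLeast_solutionSet_one hs4⟩
end

section
/- For the geometric offspring distribution on ℕ₀ with parameter s (p_k = s(1−s)^k for k ≥ 0) and g(x) = s/(1−(1−s)x), the smallest solution in [0,1] of x = g(x) + (1−x)g'(x) equals (1 + s − √((1−s)(1−5s)))/(2(1−s)) when 0 < s ≤ 1/5, and equals 1 when 1/5 < s ≤ 1. -/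
/-!
Since `1 - (1 - s) x > 0` on `[0, 1]`, clearing denominators turns `x = g x + (1 - x) g' x` into
`(x - 1) ((2 (1 - s) x - (1 + s))² - (1 - s) (1 - 5 s)) = 0`. For `s ≤ 1/5` the smaller root of the
quadratic factor lies in `[0, 1]` and is the answer; for `1/5 < s ≤ 1` the quadratic factor has no
real root, so only `x = 1` is left.
-/

lemma one_sub_mul_pos {s x : ℝ} (hs : 0 < s) (hx : x ∈ Set.Icc (0 : ℝ) 1) :
    0 < 1 - (1 - s) * x := by
  obtain ⟨hx0, hx1⟩ := hx
  rcases le_total s 1 with h | h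
  · nlinarith [mul_le_mul_of_nonneg_left hx1 (sub_nonneg.mpr h)]
  · nlinarith [mul_nonneg (sub_nonneg.mpr h) hx0]

lemma geom_fixedPoint_iff {s x : ℝ} (hu : 1 - (1 - s) * x ≠ 0) :
    x = s / (1 - (1 - s) * x) + (1 - x) * (s * (1 - s) / (1 - (1 - s) * x) ^ 2) ↔
      x = 1 ∨ (2 * (1 - s) * x - (1 + s)) ^ 2 = (1 - s) * (1 - 5 * s) := by
  set u := 1 - (1 - s) * x with hu_def
  have hsum : s / u + (1 - x) * (s * (1 - s) / u ^ 2) =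
      (s * u + (1 - x) * (s * (1 - s))) / u ^ 2 := by
    field_simp
  have hfactor : x * u ^ 2 - (s * u + (1 - x) * (s * (1 - s))) =
      (x - 1) * ((2 * (1 - s) * x - (1 + s)) ^ 2 - (1 - s) * (1 - 5 * s)) / 4 := by
    rw [hu_def]; ring
  rw [hsum, eq_div_iff (pow_ne_zero 2 hu), ← sub_eq_zero, hfactor, div_eq_zero_iff, mul_eq_zero,
    sub_eq_zero, sub_eq_zero]
  norm_num

lemma geom_fixedPoint_set_eq {s : ℝ} (hs : 0 < s) :
    {x : ℝ | x ∈ Set.Icc (0 : ℝ) 1 ∧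
        x = s / (1 - (1 - s) * x) + (1 - x) * (s * (1 - s) / (1 - (1 - s) * x) ^ 2)} =
      {x : ℝ | x ∈ Set.Icc (0 : ℝ) 1 ∧
        (x = 1 ∨ (2 * (1 - s) * x - (1 + s)) ^ 2 = (1 - s) * (1 - 5 * s))} := by
  ext x
  exact and_congr_right fun hx => geom_fixedPoint_iff (one_sub_mul_pos hs hx).ne'

lemma div_le_of_sq_sub_eq_sq {a b d x : ℝ} (ha : 0 < a) (hd : 0 ≤ d)
    (h : (a * x - b) ^ 2 = d ^ 2) : (b - d) / a ≤ x := by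
  rw [div_le_iff₀ ha]
  linarith [(abs_le_of_sq_le_sq' h.le hd).1]

lemma isLeast_of_le_one_fifth {s : ℝ} (hs : 0 < s) (hs5 : s ≤ 1 / 5) :
    IsLeast {x : ℝ | x ∈ Set.Icc (0 : ℝ) 1 ∧
        (x = 1 ∨ (2 * (1 - s) * x - (1 + s)) ^ 2 = (1 - s) * (1 - 5 * s))}
      ((1 + s - Real.sqrt ((1 - s) * (1 - 5 * s))) / (2 * (1 - s))) := by
  have ha : 0 < 2 * (1 - s) := by linarith
  set d := Real.sqrt ((1 - s) * (1 - 5 * s))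
  have hd0 : 0 ≤ d := Real.sqrt_nonneg _
  have hd2 : d ^ 2 = (1 - s) * (1 - 5 * s) := Real.sq_sqrt (by nlinarith)
  have hle_one : (1 + s - d) / (2 * (1 - s)) ≤ 1 := by
    rw [div_le_one ha]
    linarith
  refine ⟨⟨⟨div_nonneg (by nlinarith) ha.le, hle_one⟩, Or.inr ?_⟩, ?_⟩
  · rw [mul_div_cancel₀ _ ha.ne', ← hd2]
    ring
  · rintro x ⟨-, rfl | hx⟩
    · exact hle_one
    · exact div_le_of_sq_sub_eq_sq ha hd0 (hx.trans hd2.symm)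

lemma sq_sub_gt_of_one_fifth_lt {s : ℝ} (hs5 : 1 / 5 < s) (hs1 : s ≤ 1) (x : ℝ) :
    (1 - s) * (1 - 5 * s) < (2 * (1 - s) * x - (1 + s)) ^ 2 := by
  rcases hs1.lt_or_eq with h | rfl
  · nlinarith [sq_nonneg (2 * (1 - s) * x - (1 + s))]
  · norm_num

lemma isLeast_of_one_fifth_lt {s : ℝ} (hs5 : 1 / 5 < s) (hs1 : s ≤ 1) :
    IsLeast {x : ℝ | x ∈ Set.Icc (0 : ℝ) 1 ∧
        (x = 1 ∨ (2 * (1 - s) * x - (1 + s)) ^ 2 = (1 - s) * (1 - 5 * s))} 1 := by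
  refine ⟨⟨⟨zero_le_one, le_rfl⟩, Or.inl rfl⟩, ?_⟩
  rintro x ⟨-, hx | hx⟩
  · exact hx.ge
  · exact absurd hx (sq_sub_gt_of_one_fifth_lt hs5 hs1 x).ne'

/-- For the geometric offspring distribution on ℕ₀ with parameter `s`, with
`g x = s/(1-(1-s)*x)` and `g' x = s*(1-s)/(1-(1-s)*x)^2`, the smallest solution in `[0,1]`
of `x = g x + (1-x)*g' x` equals `(1+s-√((1-s)(1-5s)))/(2(1-s))` for `0 < s ≤ 1/5` and `1`
for `1/5 < s ≤ 1`. -/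
theorem stmt_4 (s : ℝ) (hs : 0 < s) :
    (s ≤ 1/5 →
      IsLeast {x : ℝ | x ∈ Set.Icc (0 : ℝ) 1 ∧
          x = s / (1 - (1 - s) * x) + (1 - x) * (s * (1 - s) / (1 - (1 - s) * x) ^ 2)}
        ((1 + s - Real.sqrt ((1 - s) * (1 - 5 * s))) / (2 * (1 - s)))) ∧
    (1/5 < s → s ≤ 1 →
      IsLeast {x : ℝ | x ∈ Set.Icc (0 : ℝ) 1 ∧
          x = s / (1 - (1 - s) * x) + (1 - x) * (s * (1 - s) / (1 - (1 - s) * x) ^ 2)}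
        1) := by
  rw [geom_fixedPoint_set_eq hs]
  exact ⟨isLeast_of_le_one_fifth hs, isLeast_of_one_fifth_lt⟩
end

section
/- Let (p_k)_{k∈ℕ₀} be a pmf with mean μ, and for q ∈ [0,1) define a distribution on ℕ by P(ξ' = k) = (1/(1−q)) Σ_{n≥k} p_n C(n,k) (1−q)^k q^{n−k} for k ≥ 1, where q satisfies g(q) = q (g the pgf of (p_k)). Then E[ξ'] = μ. -/
/-!
Writing `x = 1 - q`, the summand is `p n` times the Bernstein basis polynomial `b_{n,k}(x)`, i.e.
`ξ'` is a mixture over `n` of binomial laws `Bin(n, x)` reweighted by `1 / x`. A binomial law has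
mean `n x`, so after exchanging the two sums (justified by absolute summability, which reduces to
that of `n p_n` since the Bernstein weights are nonnegative on `[0, 1]`) the mean is
`(1 / x) · x · ∑ n p_n = μ`.
-/

open Finset Polynomial

namespace bernsteinPolynomial

variable {R : Type*} [CommRing R]

theorem sum_mul_eval (n : ℕ) (x : R) :
    ∑ k ∈ range (n + 1), (k : R) * (bernsteinPolynomial R n k).eval x = n * x := by
  simpa [eval_finsetSum, nsmul_eq_mul] using congrArg (eval x) (sum_smul R n)

theorem eval_eq_zero_of_lt {n k : ℕ} (h : n < k) (x : R) :
    (bernsteinPolynomial R n k).eval x = 0 := by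
  simp [bernsteinPolynomial, Nat.choose_eq_zero_of_lt h]

theorem eval_nonneg {n k : ℕ} {x : ℝ} (hx₀ : 0 ≤ x) (hx₁ : x ≤ 1) :
    0 ≤ (bernsteinPolynomial ℝ n k).eval x := by
  have : 0 ≤ 1 - x := sub_nonneg.mpr hx₁
  simp only [bernsteinPolynomial, eval_mul, eval_pow, eval_sub, eval_one, eval_X, eval_natCast]
  positivity

theorem tsum_mul_eval (n : ℕ) (x : ℝ) :
    ∑' k : ℕ, (k : ℝ) * (bernsteinPolynomial ℝ n k).eval x = n * x := by
  rw [tsum_eq_sum (s := range (n + 1)), sum_mul_eval]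
  intro k hk
  rw [eval_eq_zero_of_lt (by simpa using hk), mul_zero]

theorem summable_mul_eval (n : ℕ) (x : ℝ) :
    Summable fun k : ℕ => (k : ℝ) * (bernsteinPolynomial ℝ n k).eval x := by
  refine summable_of_ne_finset_zero (s := range (n + 1)) fun k hk => ?_
  rw [eval_eq_zero_of_lt (by simpa using hk), mul_zero]

theorem summable_uncurry_mul_eval {a : ℕ → ℝ} (ha : Summable fun n : ℕ => (n : ℝ) * a n)
    {x : ℝ} (hx₀ : 0 ≤ x) (hx₁ : x ≤ 1) :
    Summable (Function.uncurry fun (n k : ℕ) =>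
      a n * ((k : ℝ) * (bernsteinPolynomial ℝ n k).eval x)) := by
  have hbound : Summable (Function.uncurry fun (n k : ℕ) =>
      |a n| * ((k : ℝ) * (bernsteinPolynomial ℝ n k).eval x)) := by
    refine (summable_prod_of_nonneg fun nk => ?_).mpr ⟨fun n => ?_, ?_⟩
    · exact mul_nonneg (abs_nonneg _) (mul_nonneg (Nat.cast_nonneg _) (eval_nonneg hx₀ hx₁))
    · exact (summable_mul_eval n x).mul_left |a n|
    · simp only [Function.uncurry_apply_pair, tsum_mul_left, tsum_mul_eval]
      refine (ha.abs.mul_right x).congr fun n => ?_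
      rw [abs_mul, Nat.abs_cast]
      ring
  refine hbound.of_norm_bounded fun ⟨n, k⟩ => ?_
  simp only [Function.uncurry_apply_pair]
  rw [Real.norm_eq_abs, abs_mul, abs_of_nonneg (mul_nonneg (Nat.cast_nonneg _)
    (eval_nonneg hx₀ hx₁))]

theorem tsum_mul_tsum_mul_eval {a : ℕ → ℝ} (ha : Summable fun n : ℕ => (n : ℝ) * a n)
    {x : ℝ} (hx₀ : 0 ≤ x) (hx₁ : x ≤ 1) :
    ∑' k : ℕ, (k : ℝ) * ∑' n : ℕ, a n * (bernsteinPolynomial ℝ n k).eval x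
      = x * ∑' n : ℕ, n * a n :=
  calc ∑' k : ℕ, (k : ℝ) * ∑' n : ℕ, a n * (bernsteinPolynomial ℝ n k).eval x
      = ∑' k : ℕ, ∑' n : ℕ, a n * ((k : ℝ) * (bernsteinPolynomial ℝ n k).eval x) := by
        refine tsum_congr fun k => ?_
        rw [← tsum_mul_left]
        exact tsum_congr fun n => by ring
    _ = ∑' n : ℕ, a n * ∑' k : ℕ, (k : ℝ) * (bernsteinPolynomial ℝ n k).eval x := by
        rw [(summable_uncurry_mul_eval ha hx₀ hx₁).tsum_comm]
        exact tsum_congr fun n => tsum_mul_left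
    _ = x * ∑' n : ℕ, n * a n := by
        rw [← tsum_mul_left]
        exact tsum_congr fun n => by rw [tsum_mul_eval]; ring

end bernsteinPolynomial

theorem stmt_11_general (p : ℕ → ℝ)
    (μ : ℝ) (hmean_summable : Summable (fun k : ℕ => (k : ℝ) * p k))
    (hmean : ∑' k : ℕ, (k : ℝ) * p k = μ)
    (q : ℝ) (hq : q ∈ Set.Ico (0 : ℝ) 1) :
    ∑' k : ℕ, (k : ℝ) *
        ((1 / (1 - q)) * ∑' n : ℕ, p n * (n.choose k : ℝ) * (1 - q) ^ k * q ^ (n - k))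
      = μ := by
  obtain ⟨hq₀, hq₁⟩ := hq
  have hx : 0 < 1 - q := sub_pos.mpr hq₁
  have hweight : ∀ n k : ℕ, p n * (n.choose k : ℝ) * (1 - q) ^ k * q ^ (n - k)
      = p n * (bernsteinPolynomial ℝ n k).eval (1 - q) := fun n k => by
    simp only [bernsteinPolynomial, eval_mul, eval_pow, eval_sub, eval_one, eval_X, eval_natCast,
      sub_sub_cancel]
    ring
  calc _ = (1 / (1 - q)) * ∑' k : ℕ, (k : ℝ) *
          ∑' n : ℕ, p n * (bernsteinPolynomial ℝ n k).eval (1 - q) := by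
        rw [← tsum_mul_left]
        exact tsum_congr fun k => by simp only [hweight]; ring
    _ = μ := by
        rw [bernsteinPolynomial.tsum_mul_tsum_mul_eval hmean_summable hx.le (by linarith), hmean]
        field_simp

/-- The skewed offspring distribution `ξ'` given by
`P(ξ' = k) = (1/(1-q)) ∑_{n ≥ k} p_n C(n,k) (1-q)^k q^(n-k)` for `k ≥ 1`,
where `q` is a fixed point of the pgf `g`, has the same mean `μ` as `(p_k)`.
(Note `n.choose k = 0` for `k > n`, so the inner sum may run over all `n`.) -/
theorem stmt_11 (p : ℕ → ℝ) (hnn : ∀ k, 0 ≤ p k) (hpmf : ∑' k, p k = 1)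
    (μ : ℝ) (hmean_summable : Summable (fun k : ℕ => (k : ℝ) * p k))
    (hmean : ∑' k : ℕ, (k : ℝ) * p k = μ)
    (q : ℝ) (hq : q ∈ Set.Ico (0 : ℝ) 1)
    (hfix : (∑' k, p k * q ^ k) = q) :
    ∑' k : ℕ, (k : ℝ) *
        ((1 / (1 - q)) * ∑' n : ℕ, p n * (n.choose k : ℝ) * (1 - q) ^ k * q ^ (n - k))
      = μ :=
  stmt_11_general p μ hmean_summable hmean q hq
end

section
/- For no odd n ≥ 1 and r ∈ (0,1) does there exist a pair of i.i.d. integer-valued random variables X_1, X_2 with X_1 + X_2 distributed as Bin(n, r). In other words, the binomial distribution with an odd number of trials is not separable. -/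
/-- The pmf of the binomial distribution `Bin(n, r)`, viewed on the integers. -/
noncomputable def binPmf (n : ℕ) (r : ℝ) : ℤ → ℝ := fun m =>
  if 0 ≤ m ∧ m ≤ (n : ℤ) then
    (n.choose m.toNat : ℝ) * r ^ m.toNat * (1 - r) ^ (n - m.toNat)
  else 0

/-!
If `f ≥ 0` and `g = f * f` is its self-convolution, then `f j > 0` forces `g (2j) ≥ f j ^ 2 > 0`.
So if `n` is the top of the support of `g`, every `j` with `f j > 0` has `2j ≤ n`. A nonzero term
`f j * f (n - j)` of `g n` then gives `2j ≤ n` and `2(n - j) ≤ n`, i.e. `n = 2j` is even.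
For `r > 0` the top of the support of `Bin(n, r)` is `n` (its mass there is `r ^ n`), which is odd.
-/

theorem binPmf_of_lt {n : ℕ} {r : ℝ} {m : ℤ} (hm : (n : ℤ) < m) : binPmf n r m = 0 := by
  rw [binPmf, if_neg (by omega)]

theorem binPmf_self (n : ℕ) (r : ℝ) : binPmf n r n = r ^ n := by
  simp [binPmf]

section SelfConvolution

variable {f : ℤ → ℝ}

theorem summable_mul_comp_sub (hf0 : ∀ j, 0 ≤ f j) (hf : Summable f) (m : ℤ) :
    Summable fun j => f j * f (m - j) :=
  (hf.mul_right (∑' i, f i)).of_nonneg_of_le (fun j => mul_nonneg (hf0 j) (hf0 _))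
    fun j => mul_le_mul_of_nonneg_left (hf.le_tsum _ fun i _ => hf0 i) (hf0 j)

theorem two_mul_le_of_tsum_mul_comp_sub_eq_zero (hf0 : ∀ j, 0 ≤ f j) (hf : Summable f)
    {n j : ℤ} (hvan : ∀ m > n, ∑' i, f i * f (m - i) = 0) (hj : f j ≠ 0) : 2 * j ≤ n := by
  by_contra! h
  have hpos : 0 < f j * f (2 * j - j) := by
    rw [two_mul, add_sub_cancel_right]
    exact mul_pos ((hf0 j).lt_of_ne' hj) ((hf0 j).lt_of_ne' hj)
  have hle := (summable_mul_comp_sub hf0 hf (2 * j)).le_tsum j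
    fun i _ => mul_nonneg (hf0 i) (hf0 _)
  linarith [hvan _ h]

theorem even_of_tsum_mul_comp_sub_ne_zero (hf0 : ∀ j, 0 ≤ f j) (hf : Summable f) {n : ℤ}
    (hvan : ∀ m > n, ∑' i, f i * f (m - i) = 0) (hn : ∑' i, f i * f (n - i) ≠ 0) :
    Even n := by
  obtain ⟨j, hj⟩ : ∃ j, f j * f (n - j) ≠ 0 := by
    by_contra! h
    exact hn (by simp [h])
  have hj₁ := two_mul_le_of_tsum_mul_comp_sub_eq_zero hf0 hf hvan (left_ne_zero_of_mul hj)
  have hj₂ := two_mul_le_of_tsum_mul_comp_sub_eq_zero hf0 hf hvan (right_ne_zero_of_mul hj)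
  exact ⟨j, by omega⟩

end SelfConvolution

theorem stmt_16_general (n : ℕ) (hn : Odd n) (r : ℝ) (hr0 : 0 < r) :
    ¬ ∃ f : ℤ → ℝ, (∀ j, 0 ≤ f j) ∧ (∑' j : ℤ, f j) = 1 ∧
      ∀ m : ℤ, (∑' j : ℤ, f j * f (m - j)) = binPmf n r m := by
  rintro ⟨f, hf0, hfsum, hconv⟩
  have hf : Summable f := by
    by_contra h
    simp [tsum_eq_zero_of_not_summable h] at hfsum
  have heven : Even (n : ℤ) :=
    even_of_tsum_mul_comp_sub_ne_zero hf0 hf (fun m hm => (hconv m).trans (binPmf_of_lt hm))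
      (by rw [hconv, binPmf_self]; positivity)
  exact Nat.not_even_iff_odd.mpr hn (Int.even_coe_nat n |>.mp heven)

/-- For odd `n` and `r ∈ (0,1)`, the binomial distribution `Bin(n, r)` is not
separable: there is no pmf `f` on ℤ whose convolution with itself is `Bin(n, r)`,
i.e. no i.i.d. integer-valued `X₁, X₂` with `X₁ + X₂ ~ Bin(n, r)`. -/
theorem stmt_16 (n : ℕ) (hn : Odd n) (r : ℝ) (hr0 : 0 < r) (hr1 : r < 1) :
    ¬ ∃ f : ℤ → ℝ, (∀ j, 0 ≤ f j) ∧ (∑' j : ℤ, f j) = 1 ∧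
      ∀ m : ℤ, (∑' j : ℤ, f j * f (m - j)) = binPmf n r m :=
  stmt_16_general n hn r hr0
end
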